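/- Let φ₁,…,φ_k, h₁,…,h_r : ℝⁿ → ℝ be C¹ maps and let A = {x ∈ ℝⁿ : φ₁(x) = 0,…, φ_k(x) = 0, h₁(x) ≤ 0,…, h_r(x) ≤ 0}. Let y ∈ A and suppose that for a (possibly empty) subset {i₁,…,i_q} ⊆ {1,…,r} one has h_{i₁}(y) = 0, …, h_{i_q}(y) = 0, that h_j(y) < 0 for every j ∈ {1,…,r}\{i₁,…,i_q}, and that the gradients ∇h_{i₁}(y),…,∇h_{i_q}(y), ∇φ₁(y),…,∇φ_k(y) are linearly independent. Then the convex cone K = {w ∈ ℝⁿ : ∇φ_ℓ(y)·w = 0 for ℓ = 1,…,k and ∇h_{i_j}(y)·w ≤ 0 for j = 1,…,q} is a Boltyanski approximating cone to A at y. -/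

import Mathlib

open Set Metric Filter Asymptotics Topology

/-- A convex cone in a real vector space: contains `0`, is convex, and is
invariant under multiplication by nonnegative scalars. -/
def IsConvexCone {E : Type*} [AddCommMonoid E] [Module ℝ E] (C : Set E) : Prop :=
  (0 : E) ∈ C ∧ Convex ℝ C ∧ ∀ r : ℝ, 0 ≤ r → ∀ c ∈ C, r • c ∈ C

/-- `K` is a Boltyanski approximating cone to `A` at `y`: there are `m : ℕ`, a convex cone
`C ⊆ ℝᵐ`, a linear map `L : ℝᵐ → E` with `K = L(C)`, a `δ > 0` and a continuous map
`F : C ∩ B_m(δ) → A` with `F 0 = y` and `F c = y + L c + o(c)`. -/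
def IsBoltyanskiCone {E : Type*} [NormedAddCommGroup E] [NormedSpace ℝ E]
    (A : Set E) (y : E) (K : Set E) : Prop :=
  ∃ (m : ℕ) (C : Set (EuclideanSpace ℝ (Fin m)))
    (L : EuclideanSpace ℝ (Fin m) →ₗ[ℝ] E) (δ : ℝ)
    (F : EuclideanSpace ℝ (Fin m) → E),
    IsConvexCone C ∧ K = ⇑L '' C ∧ 0 < δ ∧
    ContinuousOn F (C ∩ closedBall 0 δ) ∧
    (∀ c ∈ C ∩ closedBall 0 δ, F c ∈ A) ∧ F 0 = y ∧
    (fun c => F c - y - L c) =o[𝓝[C ∩ closedBall 0 δ] 0] (fun c => c)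

/-
The active constraints `g = (φ, h_I)` have surjective derivative `g'` at `y`, so by the
inverse function theorem (applied to `x ↦ (g x, p (x - y))` with `p` a projection onto `ker g'`)
there is a map `Ψ` with `Ψ 0 = y`, `Ψ w = y + w + o(w)` and `g (Ψ w) = g y + g' w` near `0`.
For `w` in the cone `K` this gives `φ (Ψ w) = 0` and `h_j (Ψ w) = h_j'(y) w ≤ 0` for active
`j`, while the inactive constraints stay negative near `y` by continuity. So `Ψ` restricted to `K`
witnesses the Boltyanski property with `C = K` and `L = id`.
-/

namespace HasStrictFDerivAt

variable {𝕜 : Type*} [NontriviallyNormedField 𝕜] {E F : Type*} [NormedAddCommGroup E]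
  [NormedSpace 𝕜 E] [CompleteSpace E] [NormedAddCommGroup F] [NormedSpace 𝕜 F]
  {f : E → F} {a : E}

theorem exists_straightening_of_equiv {f' : E ≃L[𝕜] F}
    (hf : HasStrictFDerivAt f (f' : E →L[𝕜] F) a) :
    ∃ Ψ : E → E, Ψ 0 = a ∧ HasFDerivAt Ψ (ContinuousLinearMap.id 𝕜 E) 0 ∧
      ∀ᶠ w in 𝓝 0, ContinuousAt Ψ w ∧ f (Ψ w) = f a + f' w := by
  set P := hf.toOpenPartialHomeomorph f
  have hline : Tendsto (fun w => f a + f' w) (𝓝 0) (𝓝 (f a)) := by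
    simpa using (tendsto_const_nhds (x := f a)).add (f'.continuous.tendsto 0)
  refine ⟨fun w => hf.localInverse f f' a (f a + f' w), by simp, ?_, ?_⟩
  · have hinv : HasFDerivAt (hf.localInverse f f' a) (f'.symm : F →L[𝕜] E) (f a + f' 0) := by
      simpa using hf.to_localInverse.hasFDerivAt
    simpa [Function.comp_def] using hinv.comp (0 : E) (f'.hasFDerivAt.const_add (f a))
  · have hcont : ∀ᶠ z in 𝓝 (f a), ContinuousAt (hf.localInverse f f' a) z :=
      mem_of_superset (P.open_target.mem_nhds hf.image_mem_toOpenPartialHomeomorph_target)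
        fun _ hz => P.continuousAt_symm hz
    filter_upwards [hline.eventually hcont, hline.eventually hf.eventually_right_inverse]
      with w hwc hwf
    exact ⟨ContinuousAt.comp hwc (by fun_prop), hwf⟩

theorem exists_straightening_of_surjective {f' : E →L[𝕜] F} [CompleteSpace F]
    (hf : HasStrictFDerivAt f f' a) (hf' : f'.range = ⊤) (hker : f'.ker.ClosedComplemented) :
    ∃ Ψ : E → E, Ψ 0 = a ∧ HasFDerivAt Ψ (ContinuousLinearMap.id 𝕜 E) 0 ∧
      ∀ᶠ w in 𝓝 0, ContinuousAt Ψ w ∧ f (Ψ w) = f a + f' w := by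
  obtain ⟨Ψ, hΨ0, hΨ, hΨev⟩ := (implicitFunctionDataOfComplemented f f' hf hf' hker)
    |>.hasStrictFDerivAt.exists_straightening_of_equiv
  exact ⟨Ψ, hΨ0, hΨ, hΨev.mono fun w hw => ⟨hw.1, congrArg Prod.fst hw.2⟩⟩

end HasStrictFDerivAt

theorem ContinuousLinearMap.range_pi_eq_top_of_linearIndependent {𝕜 E ι : Type*} [Field 𝕜]
    [TopologicalSpace 𝕜] [IsTopologicalRing 𝕜] [AddCommGroup E] [Module 𝕜 E]
    [TopologicalSpace E] [Finite ι] {l : ι → E →L[𝕜] 𝕜}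
    (hl : LinearIndependent 𝕜 l) : (ContinuousLinearMap.pi l).range = ⊤ := by
  have hfun : LinearIndependent 𝕜 fun i => ⇑(l i) :=
    hl.map' ((LinearMap.ltoFun 𝕜 E 𝕜 𝕜).comp (ContinuousLinearMap.coeLM 𝕜))
      (LinearMap.ker_eq_bot.mpr fun _ _ h =>
        ContinuousLinearMap.coe_injective (DFunLike.coe_injective h))
  rw [← span_flip_eq_top_iff_linearIndependent] at hfun
  rw [eq_top_iff, ← hfun, Submodule.span_le]
  rintro _ ⟨x, rfl⟩
  exact ⟨x, rfl⟩

theorem isConvexCone_setOf_eq_zero_and_nonpos {E ι κ : Type*} [AddCommGroup E] [Module ℝ E]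
    [TopologicalSpace E] (f : ι → E →L[ℝ] ℝ) (g : κ → E →L[ℝ] ℝ) (s : Set κ) :
    IsConvexCone {w | (∀ i, f i w = 0) ∧ ∀ j ∈ s, g j w ≤ 0} := by
  refine ⟨by simp, ?_, ?_⟩
  · intro u hu v hv a b ha hb _
    refine ⟨fun i => by simp [hu.1 i, hv.1 i], fun j hj => ?_⟩
    simpa using add_nonpos (mul_nonpos_of_nonneg_of_nonpos ha (hu.2 j hj))
      (mul_nonpos_of_nonneg_of_nonpos hb (hv.2 j hj))
  · intro c hc u hu
    exact ⟨fun i => by simp [hu.1 i], fun j hj => by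
      simpa using mul_nonpos_of_nonneg_of_nonpos hc (hu.2 j hj)⟩

theorem boltyanski_of_sublevel_intersection_general {n k r : ℕ}
    (φ : Fin k → EuclideanSpace ℝ (Fin n) → ℝ)
    (h : Fin r → EuclideanSpace ℝ (Fin n) → ℝ)
    (hφ : ∀ i, ContDiff ℝ 1 (φ i)) (hh : ∀ j, ContDiff ℝ 1 (h j))
    (y : EuclideanSpace ℝ (Fin n))
    (hyφ : ∀ i, φ i y = 0)
    (I : Finset (Fin r))
    (hact : ∀ j ∈ I, h j y = 0)
    (hinact : ∀ j ∉ I, h j y < 0)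
    (hind : LinearIndependent ℝ
      (Sum.elim (fun i : Fin k => fderiv ℝ (φ i) y)
        (fun j : {j // j ∈ I} => fderiv ℝ (h j) y))) :
    IsBoltyanskiCone
      {x | (∀ i, φ i x = 0) ∧ ∀ j, h j x ≤ 0} y
      {w | (∀ i, fderiv ℝ (φ i) y w = 0) ∧ ∀ j ∈ I, fderiv ℝ (h j) y w ≤ 0} := by
  set g : EuclideanSpace ℝ (Fin n) → Fin k ⊕ I → ℝ :=
    fun x => Sum.elim (fun i => φ i x) (fun j : I => h j x)
  set g' := ContinuousLinearMap.pi
    (Sum.elim (fun i : Fin k => fderiv ℝ (φ i) y) (fun j : I => fderiv ℝ (h j) y))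
  have hg : HasStrictFDerivAt g g' y := by
    refine hasStrictFDerivAt_pi'.mpr fun a => ?_
    rcases a with i | j
    · exact (hφ i).hasStrictFDerivAt one_ne_zero
    · exact (hh j).hasStrictFDerivAt one_ne_zero
  obtain ⟨Ψ, hΨ0, hΨ, hΨev⟩ := hg.exists_straightening_of_surjective
    (ContinuousLinearMap.range_pi_eq_top_of_linearIndependent hind)
    g'.ker_closedComplemented_of_finiteDimensional_range
  have hinact_ev : ∀ᶠ w in 𝓝 0, ∀ j ∉ I, h j (Ψ w) < 0 :=
    eventually_all.2 fun j => eventually_imp_distrib_left.2 fun hj =>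
      ((hh j).continuous.continuousAt.comp hΨ.continuousAt).eventually_lt continuousAt_const
        (by simpa [hΨ0] using hinact j hj)
  obtain ⟨δ, hδ, hball⟩ := nhds_basis_closedBall.eventually_iff.mp (hΨev.and hinact_ev)
  refine ⟨n, _, LinearMap.id, δ, Ψ, isConvexCone_setOf_eq_zero_and_nonpos _ _ _,
    (image_id _).symm, hδ, fun w hw => (hball hw.2).1.1.continuousWithinAt, ?_, hΨ0, ?_⟩
  · rintro w ⟨hwK, hwδ⟩
    obtain ⟨⟨-, hgw⟩, hneg⟩ := hball hwδ
    refine ⟨fun i => by simpa [g, g', hyφ i, hwK.1 i] using congrFun hgw (.inl i), fun j => ?_⟩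
    by_cases hj : j ∈ I
    · have hj_eq : h j (Ψ w) = fderiv ℝ (h j) y w := by
        simpa [g, g', hact j hj] using congrFun hgw (.inr ⟨j, hj⟩)
      exact hj_eq ▸ hwK.2 j hj
    · exact (hneg j hj).le
  · simpa [hΨ0] using (hasFDerivAt_iff_isLittleO_nhds_zero.mp hΨ).mono nhdsWithin_le_nhds

/-- Approximating cone to the intersection of level sets and sublevel sets:
Mangasarian–Fromovitz-type cone under linear independence of active gradients. -/
theorem boltyanski_of_sublevel_intersection {n k r : ℕ}
    (φ : Fin k → EuclideanSpace ℝ (Fin n) → ℝ)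
    (h : Fin r → EuclideanSpace ℝ (Fin n) → ℝ)
    (hφ : ∀ i, ContDiff ℝ 1 (φ i)) (hh : ∀ j, ContDiff ℝ 1 (h j))
    (y : EuclideanSpace ℝ (Fin n))
    (hyφ : ∀ i, φ i y = 0) (hyh : ∀ j, h j y ≤ 0)
    (I : Finset (Fin r))
    (hact : ∀ j ∈ I, h j y = 0)
    (hinact : ∀ j ∉ I, h j y < 0)
    (hind : LinearIndependent ℝ
      (Sum.elim (fun i : Fin k => fderiv ℝ (φ i) y)
        (fun j : {j // j ∈ I} => fderiv ℝ (h j) y))) :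
    IsBoltyanskiCone
      {x | (∀ i, φ i x = 0) ∧ ∀ j, h j x ≤ 0} y
      {w | (∀ i, fderiv ℝ (φ i) y w = 0) ∧ ∀ j ∈ I, fderiv ℝ (h j) y w ≤ 0} :=
  boltyanski_of_sublevel_intersection_general φ h hφ hh y hyφ I hact hinact hind
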